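/- arXiv:2512.13414 — 6 statements merged into one kernel-verified Lean document; each statement's English description precedes it below -/
import Mathlib

section
/- Let x > 0 and y be real numbers, let n2 be a positive integer, and let r ≥ 1 be a real number such that x + y > 0 and x - r*y > 0. Then x^((r+1)*n2) ≥ (x+y)^(r*n2) * (x-r*y)^(n2). -/
/-! Weighted AM–GM with weights `r/(r+1)` and `1/(r+1)` at the points `x + y` and `x - r*y`,
whose weighted mean is exactly `x`, raised to the power `(r+1)*n2`. -/

open Real

namespace Real

theorem rpow_mul_rpow_le_weightedMean_rpow {a b p q : ℝ} (ha : 0 ≤ a) (hb : 0 ≤ b)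
    (hp : 0 ≤ p) (hq : 0 ≤ q) (hpq : 0 < p + q) :
    a ^ p * b ^ q ≤ ((p * a + q * b) / (p + q)) ^ (p + q) := by
  have hweights : p / (p + q) + q / (p + q) = 1 := by field_simp
  have amgm := geom_mean_le_arith_mean2_weighted (div_nonneg hp hpq.le) (div_nonneg hq hpq.le)
    ha hb hweights
  have hmean : p / (p + q) * a + q / (p + q) * b = (p * a + q * b) / (p + q) := by ring
  rw [hmean] at amgm
  calc a ^ p * b ^ q
      = (a ^ (p / (p + q)) * b ^ (q / (p + q))) ^ (p + q) := by
        rw [mul_rpow (by positivity) (by positivity), ← rpow_mul ha, ← rpow_mul hb,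
          div_mul_cancel₀ _ hpq.ne', div_mul_cancel₀ _ hpq.ne']
    _ ≤ ((p * a + q * b) / (p + q)) ^ (p + q) := by gcongr

end Real

theorem stmt0_general (x y r : ℝ) (n2 : ℕ) (hn2 : 0 < n2) (hr : 1 ≤ r)
    (hxy : 0 < x + y) (hxr : 0 < x - r * y) :
    (x + y) ^ (r * n2) * (x - r * y) ^ (n2 : ℝ) ≤ x ^ ((r + 1) * n2) := by
  have hn2' : (0 : ℝ) < n2 := Nat.cast_pos.mpr hn2
  have hmean : (r * n2 * (x + y) + n2 * (x - r * y)) / (r * n2 + n2) = x := by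
    field_simp
    ring
  have key := rpow_mul_rpow_le_weightedMean_rpow (p := r * n2) hxy.le hxr.le (by positivity)
    hn2'.le (by positivity)
  rwa [hmean, ← add_one_mul] at key

theorem stmt0 (x y r : ℝ) (n2 : ℕ) (hx : 0 < x) (hn2 : 0 < n2) (hr : 1 ≤ r)
    (hxy : 0 < x + y) (hxr : 0 < x - r * y) :
    (x + y) ^ (r * n2) * (x - r * y) ^ (n2 : ℝ) ≤ x ^ ((r + 1) * n2) :=
  stmt0_general x y r n2 hn2 hr hxy hxr
end

section
/- Let θ1, θ2 ∈ [0,1] and let d1, d2, n1, n2 be positive reals with n1/d1 = n2/d2 (proportional allocation). Let θ = (d1*θ1 + d2*θ2)/(d1 + d2) and n = n1 + n2. Then (1 - θ1)^(n1) * (1 - θ2)^(n2) ≤ (1 - θ)^n, equivalently 1 - (1-θ1)^(n1)*(1-θ2)^(n2) ≥ 1 - (1-θ)^n. -/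
/-! Weighted AM–GM with weights `n₁, n₂` bounds `(1 - θ₁) ^ n₁ * (1 - θ₂) ^ n₂` by the
`(n₁ + n₂)`-th power of the `n`-weighted mean of the `1 - θᵢ`; under proportional allocation the
`n`-weighted mean coincides with the `d`-weighted one, which is `1 - θ`. -/

open Real

lemma rpow_mul_rpow_le_weightedMean_rpow {a b p q : ℝ} (ha : 0 ≤ a) (hb : 0 ≤ b)
    (hp : 0 ≤ p) (hq : 0 ≤ q) :
    a ^ p * b ^ q ≤ ((p * a + q * b) / (p + q)) ^ (p + q) := by
  rcases (add_nonneg hp hq).eq_or_lt with hpq | hpq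
  · obtain ⟨rfl, rfl⟩ : p = 0 ∧ q = 0 := ⟨by linarith, by linarith⟩
    simp
  have hw : p / (p + q) + q / (p + q) = 1 := by field_simp
  have amgm := geom_mean_le_arith_mean2_weighted (by positivity) (by positivity) ha hb hw
  have hmean : p / (p + q) * a + q / (p + q) * b = (p * a + q * b) / (p + q) := by ring
  calc a ^ p * b ^ q
      = (a ^ (p / (p + q)) * b ^ (q / (p + q))) ^ (p + q) := by
        rw [mul_rpow (by positivity) (by positivity), ← rpow_mul ha, ← rpow_mul hb,
          div_mul_cancel₀ _ hpq.ne', div_mul_cancel₀ _ hpq.ne']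
    _ ≤ ((p * a + q * b) / (p + q)) ^ (p + q) := by
        rw [← hmean]
        exact rpow_le_rpow (by positivity) amgm hpq.le

lemma weightedMean_eq_of_div_eq {n₁ n₂ d₁ d₂ : ℝ} (x₁ x₂ : ℝ) (hd₁ : d₁ ≠ 0) (hd₂ : d₂ ≠ 0)
    (hn : n₁ + n₂ ≠ 0) (hprop : n₁ / d₁ = n₂ / d₂) :
    (n₁ * x₁ + n₂ * x₂) / (n₁ + n₂) = (d₁ * x₁ + d₂ * x₂) / (d₁ + d₂) := by
  set c := n₁ / d₁
  have hn₁ : n₁ = c * d₁ := (div_mul_cancel₀ n₁ hd₁).symm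
  have hn₂ : n₂ = c * d₂ := by rw [hprop, div_mul_cancel₀ n₂ hd₂]
  have hcd : c * (d₁ + d₂) ≠ 0 := by rwa [mul_add, ← hn₁, ← hn₂]
  rw [hn₁, hn₂, ← mul_add]
  field_simp [left_ne_zero_of_mul hcd, right_ne_zero_of_mul hcd]

theorem stmt2_general (θ1 θ2 d1 d2 n1 n2 : ℝ)
    (hθ1' : θ1 ≤ 1) (hθ2' : θ2 ≤ 1)
    (hd1 : 0 < d1) (hd2 : 0 < d2) (hn1 : 0 < n1) (hn2 : 0 < n2)
    (hprop : n1 / d1 = n2 / d2) :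
    (1 - θ1) ^ n1 * (1 - θ2) ^ n2
      ≤ (1 - (d1 * θ1 + d2 * θ2) / (d1 + d2)) ^ (n1 + n2) := by
  calc (1 - θ1) ^ n1 * (1 - θ2) ^ n2
      ≤ ((n1 * (1 - θ1) + n2 * (1 - θ2)) / (n1 + n2)) ^ (n1 + n2) :=
        rpow_mul_rpow_le_weightedMean_rpow (by linarith) (by linarith) hn1.le hn2.le
    _ = ((d1 * (1 - θ1) + d2 * (1 - θ2)) / (d1 + d2)) ^ (n1 + n2) := by
        rw [weightedMean_eq_of_div_eq _ _ hd1.ne' hd2.ne' (by positivity) hprop]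
    _ = (1 - (d1 * θ1 + d2 * θ2) / (d1 + d2)) ^ (n1 + n2) := by
        congr 1
        field_simp
        ring

theorem stmt2 (θ1 θ2 d1 d2 n1 n2 : ℝ)
    (hθ1 : 0 ≤ θ1) (hθ1' : θ1 ≤ 1) (hθ2 : 0 ≤ θ2) (hθ2' : θ2 ≤ 1)
    (hd1 : 0 < d1) (hd2 : 0 < d2) (hn1 : 0 < n1) (hn2 : 0 < n2)
    (hprop : n1 / d1 = n2 / d2) :
    (1 - θ1) ^ n1 * (1 - θ2) ^ n2
      ≤ (1 - (d1 * θ1 + d2 * θ2) / (d1 + d2)) ^ (n1 + n2) :=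
  stmt2_general θ1 θ2 d1 d2 n1 n2 hθ1' hθ2' hd1 hd2 hn1 hn2 hprop
end

section
/- Let k ≥ 1 and for i = 1,...,k let θ_i ∈ [0,1], d_i > 0, and n_i > 0 be reals with n_i/d_i = c for a common constant c > 0. Let d = Σ_i d_i, n = Σ_i n_i, and θ = (Σ_i d_i*θ_i)/d. Then ∏_{i=1}^k (1 - θ_i)^(n_i) ≤ (1 - θ)^n. -/
open Real

/-! Weighted AM–GM with weights `d i / ∑ d` bounds `∏ (1 - θ i) ^ (d i / ∑ d)` by `1 - θ`;
since `n i = c * d i`, raising both sides to the power `c * ∑ d = ∑ n` gives the claim. -/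

theorem Real.prod_rpow_mul_le_weighted_mean_rpow {ι : Type*} (s : Finset ι) (w z : ι → ℝ)
    (hw : ∀ i ∈ s, 0 ≤ w i) (hW : 0 < ∑ i ∈ s, w i) (hz : ∀ i ∈ s, 0 ≤ z i) {c : ℝ}
    (hc : 0 ≤ c) :
    ∏ i ∈ s, z i ^ (c * w i) ≤ ((∑ i ∈ s, w i * z i) / ∑ i ∈ s, w i) ^ (c * ∑ i ∈ s, w i) := by
  have hprod : 0 ≤ ∏ i ∈ s, z i ^ w i := Finset.prod_nonneg fun i hi => rpow_nonneg (hz i hi) _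
  calc ∏ i ∈ s, z i ^ (c * w i)
      = ((∏ i ∈ s, z i ^ w i) ^ (∑ i ∈ s, w i)⁻¹) ^ (c * ∑ i ∈ s, w i) := by
        rw [← rpow_mul hprod, mul_comm c, inv_mul_cancel_left₀ hW.ne',
          ← finsetProd_rpow _ _ fun i hi => rpow_nonneg (hz i hi) _]
        exact Finset.prod_congr rfl fun i hi => by rw [← rpow_mul (hz i hi), mul_comm]
    _ ≤ ((∑ i ∈ s, w i * z i) / ∑ i ∈ s, w i) ^ (c * ∑ i ∈ s, w i) :=
        rpow_le_rpow (rpow_nonneg hprod _) (geom_mean_le_arith_mean s w z hw hW hz)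
          (mul_nonneg hc hW.le)

theorem stmt3_general (k : ℕ) (hk : 1 ≤ k) (θ d n : Fin k → ℝ) (c : ℝ) (hc : 0 < c)
    (hθ : ∀ i, 0 ≤ θ i ∧ θ i ≤ 1) (hd : ∀ i, 0 < d i)
    (hprop : ∀ i, n i / d i = c) :
    ∏ i, (1 - θ i) ^ (n i)
      ≤ (1 - (∑ i, d i * θ i) / (∑ i, d i)) ^ (∑ i, n i) := by
  have hD : 0 < ∑ i, d i := Finset.sum_pos (fun i _ => hd i) ⟨⟨0, hk⟩, Finset.mem_univ _⟩
  have hn : n = fun i => c * d i := funext fun i => by rw [← hprop i, div_mul_cancel₀ _ (hd i).ne']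
  have hmean : 1 - (∑ i, d i * θ i) / ∑ i, d i = (∑ i, d i * (1 - θ i)) / ∑ i, d i := by
    rw [sub_div' hD.ne', one_mul, ← Finset.sum_sub_distrib]
    simp only [mul_one_sub]
  rw [hn, hmean, ← Finset.mul_sum]
  exact prod_rpow_mul_le_weighted_mean_rpow _ d _ (fun i _ => (hd i).le) hD
    (fun i _ => sub_nonneg.2 (hθ i).2) hc.le

theorem stmt3 (k : ℕ) (hk : 1 ≤ k) (θ d n : Fin k → ℝ) (c : ℝ) (hc : 0 < c)
    (hθ : ∀ i, 0 ≤ θ i ∧ θ i ≤ 1) (hd : ∀ i, 0 < d i) (hn : ∀ i, 0 < n i)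
    (hprop : ∀ i, n i / d i = c) :
    ∏ i, (1 - θ i) ^ (n i)
      ≤ (1 - (∑ i, d i * θ i) / (∑ i, d i)) ^ (∑ i, n i) :=
  stmt3_general k hk θ d n c hc hθ hd hprop
end

section
/- Let k ≥ 1 and for i = 1,...,k let m_i be a nonnegative real, d_i a positive real with m_i ≤ d_i, and n_i a positive real with n_i/d_i = c for a common constant c > 0. Let m = Σ_i m_i, d = Σ_i d_i, and n = Σ_i n_i. Then 1 - ∏_{i=1}^k (1 - m_i/d_i)^(n_i) ≥ 1 - (1 - m/d)^n. -/
/-! With weights `d i / ∑ d`, the product `∏ (1 - m i / d i) ^ (c * d i)` is the `c ∑ d`-th power of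
a weighted geometric mean of the `1 - m i / d i`, whose weighted arithmetic mean is
`1 - ∑ m / ∑ d`; AM–GM and monotonicity of `t ↦ t ^ (c ∑ d)` conclude. -/

open Real

theorem Real.prod_rpow_mul_le_arith_mean_rpow {ι : Type*} (s : Finset ι) (w z : ι → ℝ) {c : ℝ}
    (hc : 0 ≤ c) (hw : ∀ i ∈ s, 0 ≤ w i) (hw' : 0 < ∑ i ∈ s, w i) (hz : ∀ i ∈ s, 0 ≤ z i) :
    ∏ i ∈ s, z i ^ (c * w i)
      ≤ ((∑ i ∈ s, w i * z i) / ∑ i ∈ s, w i) ^ (c * ∑ i ∈ s, w i) := by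
  have hG : 0 ≤ ∏ i ∈ s, z i ^ w i := Finset.prod_nonneg fun i hi => rpow_nonneg (hz i hi) _
  calc ∏ i ∈ s, z i ^ (c * w i)
      = ((∏ i ∈ s, z i ^ w i) ^ (∑ i ∈ s, w i)⁻¹) ^ (c * ∑ i ∈ s, w i) := by
        rw [← rpow_mul hG, mul_left_comm, inv_mul_cancel₀ hw'.ne', mul_one,
          ← Real.finsetProd_rpow s _ (fun i hi => rpow_nonneg (hz i hi) _)]
        exact Finset.prod_congr rfl fun i hi => by rw [mul_comm, rpow_mul (hz i hi)]
    _ ≤ _ := rpow_le_rpow (rpow_nonneg hG _) (geom_mean_le_arith_mean s w z hw hw' hz)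
        (mul_nonneg hc hw'.le)

theorem stmt4_general (k : ℕ) (hk : 1 ≤ k) (m d n : Fin k → ℝ) (c : ℝ) (hc : 0 < c)
    (hd : ∀ i, 0 < d i) (hmd : ∀ i, m i ≤ d i)
    (hprop : ∀ i, n i / d i = c) :
    1 - (1 - (∑ i, m i) / (∑ i, d i)) ^ (∑ i, n i)
      ≤ 1 - ∏ i, (1 - m i / d i) ^ (n i) := by
  have hD : 0 < ∑ i, d i :=
    Finset.sum_pos (fun i _ => hd i) (Finset.univ_nonempty_iff.2 ⟨⟨0, hk⟩⟩)
  have hn_eq : ∀ i, n i = c * d i := fun i => by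
    rw [← hprop i, div_mul_cancel₀ _ (hd i).ne']
  have hx : ∀ i, 0 ≤ 1 - m i / d i := fun i => sub_nonneg.2 ((div_le_one (hd i)).2 (hmd i))
  have hmean : (∑ i, d i * (1 - m i / d i)) / ∑ i, d i = 1 - (∑ i, m i) / ∑ i, d i := by
    simp only [mul_sub, mul_one, mul_div_cancel₀ _ (hd _).ne', Finset.sum_sub_distrib]
    rw [sub_div, div_self hD.ne']
  have hamgm := Real.prod_rpow_mul_le_arith_mean_rpow Finset.univ d (fun i => 1 - m i / d i) hc.le
    (fun i _ => (hd i).le) hD (fun i _ => hx i)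
  rw [hmean] at hamgm
  simp only [hn_eq, ← Finset.mul_sum]
  linarith

theorem stmt4 (k : ℕ) (hk : 1 ≤ k) (m d n : Fin k → ℝ) (c : ℝ) (hc : 0 < c)
    (hm : ∀ i, 0 ≤ m i) (hd : ∀ i, 0 < d i) (hmd : ∀ i, m i ≤ d i)
    (hn : ∀ i, 0 < n i) (hprop : ∀ i, n i / d i = c) :
    1 - (1 - (∑ i, m i) / (∑ i, d i)) ^ (∑ i, n i)
      ≤ 1 - ∏ i, (1 - m i / d i) ^ (n i) :=
  stmt4_general k hk m d n c hc hd hmd hprop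
end

section
/- Let k ≥ 2, and suppose that for all partitions into at most k subdomains with proportional allocation the inequality ∏_{i=1}^k (1-θ_i)^(n_i) ≤ (1-θ)^n holds (with θ the size-weighted average and n = Σ n_i). Then the same inequality holds for k+1 subdomains: given θ_i ∈ [0,1], d_i > 0, n_i > 0 with n_i/d_i constant for i = 1,...,k+1, merging the first k subdomains into one subdomain with size d' = Σ_{i=1}^k d_i, allocation n' = Σ_{i=1}^k n_i, and rate θ' = (Σ_{i=1}^k d_i θ_i)/d' satisfies ∏_{i=1}^{k+1} (1-θ_i)^(n_i) ≤ (1-θ')^(n') * (1-θ_{k+1})^(n_{k+1}) ≤ (1-θ)^n. -/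
/-!
Merge the first `k` subdomains into one of size `d' = ∑ dᵢ`, allocation `n' = ∑ nᵢ` and rate
`θ' = (∑ dᵢ θᵢ) / d'`. The rate `θ'` is a weighted average, hence again in `[0, 1]`, and
`n' / d' = c`, so the allocation stays proportional. The first inequality is then the `k`-subdomain
case multiplied by the untouched factor of subdomain `k + 1`, and the second is the two-subdomain
case applied to the merged subdomain and subdomain `k + 1`.
-/

open Real Finset

def ProportionalAllocationBound (j : ℕ) : Prop :=
  ∀ (θ d n : Fin j → ℝ) (c : ℝ), 0 < c →
    (∀ i, 0 ≤ θ i ∧ θ i ≤ 1) → (∀ i, 0 < d i) → (∀ i, 0 < n i) →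
    (∀ i, n i / d i = c) →
    ∏ i, (1 - θ i) ^ (n i) ≤ (1 - (∑ i, d i * θ i) / (∑ i, d i)) ^ (∑ i, n i)

theorem ProportionalAllocationBound.two {θ₁ θ₂ d₁ d₂ n₁ n₂ c : ℝ}
    (h : ProportionalAllocationBound 2) (hc : 0 < c)
    (hθ₁ : 0 ≤ θ₁ ∧ θ₁ ≤ 1) (hθ₂ : 0 ≤ θ₂ ∧ θ₂ ≤ 1) (hd₁ : 0 < d₁) (hd₂ : 0 < d₂)
    (hn₁ : 0 < n₁) (hn₂ : 0 < n₂) (h₁ : n₁ / d₁ = c) (h₂ : n₂ / d₂ = c) :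
    (1 - θ₁) ^ n₁ * (1 - θ₂) ^ n₂
      ≤ (1 - (d₁ * θ₁ + d₂ * θ₂) / (d₁ + d₂)) ^ (n₁ + n₂) := by
  simpa using h ![θ₁, θ₂] ![d₁, d₂] ![n₁, n₂] c hc (Fin.forall_fin_two.2 ⟨hθ₁, hθ₂⟩)
    (Fin.forall_fin_two.2 ⟨hd₁, hd₂⟩) (Fin.forall_fin_two.2 ⟨hn₁, hn₂⟩)
    (Fin.forall_fin_two.2 ⟨h₁, h₂⟩)

theorem Finset.sum_div_sum_eq_of_forall_div_eq {ι K : Type*} [Field K] {s : Finset ι}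
    {n d : ι → K} {c : K}
    (hd : ∀ i ∈ s, d i ≠ 0) (hs : ∑ i ∈ s, d i ≠ 0) (h : ∀ i ∈ s, n i / d i = c) :
    (∑ i ∈ s, n i) / (∑ i ∈ s, d i) = c := by
  rw [div_eq_iff hs, mul_sum]
  exact sum_congr rfl fun i hi => (div_eq_iff (hd i hi)).1 (h i hi)

theorem Finset.sum_mul_div_sum_mem_Icc {ι K : Type*} [Field K] [LinearOrder K]
    [IsStrictOrderedRing K] {s : Finset ι} {w θ : ι → K} {a b : K}
    (hw : ∀ i ∈ s, 0 ≤ w i) (hs : 0 < ∑ i ∈ s, w i) (hθ : ∀ i ∈ s, θ i ∈ Set.Icc a b) :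
    (∑ i ∈ s, w i * θ i) / (∑ i ∈ s, w i) ∈ Set.Icc a b := by
  have := (convex_Icc a b).centerMass_mem hw hs hθ
  rwa [centerMass, smul_eq_mul, inv_mul_eq_div] at this

theorem stmt11 (k : ℕ) (hk : 2 ≤ k)
    (IH : ∀ j : ℕ, 1 ≤ j → j ≤ k → ∀ (θ d n : Fin j → ℝ) (c : ℝ), 0 < c →
      (∀ i, 0 ≤ θ i ∧ θ i ≤ 1) → (∀ i, 0 < d i) → (∀ i, 0 < n i) →
      (∀ i, n i / d i = c) →
      ∏ i, (1 - θ i) ^ (n i)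
        ≤ (1 - (∑ i, d i * θ i) / (∑ i, d i)) ^ (∑ i, n i))
    (θ d n : Fin (k + 1) → ℝ) (c : ℝ) (hc : 0 < c)
    (hθ : ∀ i, 0 ≤ θ i ∧ θ i ≤ 1) (hd : ∀ i, 0 < d i) (hn : ∀ i, 0 < n i)
    (hprop : ∀ i, n i / d i = c) :
    ∏ i, (1 - θ i) ^ (n i)
      ≤ (1 - (∑ i : Fin k, d i.castSucc * θ i.castSucc) / (∑ i : Fin k, d i.castSucc))
            ^ (∑ i : Fin k, n i.castSucc)
          * (1 - θ (Fin.last k)) ^ (n (Fin.last k)) ∧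
    (1 - (∑ i : Fin k, d i.castSucc * θ i.castSucc) / (∑ i : Fin k, d i.castSucc))
          ^ (∑ i : Fin k, n i.castSucc)
        * (1 - θ (Fin.last k)) ^ (n (Fin.last k))
      ≤ (1 - (∑ i, d i * θ i) / (∑ i, d i)) ^ (∑ i, n i) := by
  have hne : (univ : Finset (Fin k)).Nonempty := univ_nonempty_iff.2 ⟨⟨0, by omega⟩⟩
  have hD : 0 < ∑ i : Fin k, d i.castSucc := sum_pos (fun i _ => hd _) hne
  have hN : 0 < ∑ i : Fin k, n i.castSucc := sum_pos (fun i _ => hn _) hne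
  have hmerged_rate := sum_mul_div_sum_mem_Icc (fun i _ => (hd i.castSucc).le) hD
    fun i _ => hθ i.castSucc
  have hmerged_prop := sum_div_sum_eq_of_forall_div_eq (fun i _ => (hd i.castSucc).ne') hD.ne'
    fun i _ => hprop i.castSucc
  refine ⟨?_, ?_⟩
  · rw [Fin.prod_univ_castSucc]
    exact mul_le_mul_of_nonneg_right
      (IH k (by omega) le_rfl _ _ _ c hc (fun _ => hθ _) (fun _ => hd _) (fun _ => hn _)
        fun _ => hprop _)
      (rpow_nonneg (sub_nonneg.2 (hθ _).2) _)
  · have h := ProportionalAllocationBound.two (IH 2 (by norm_num) hk) hc hmerged_rate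
      (hθ (Fin.last k)) hD (hd (Fin.last k)) hN (hn (Fin.last k)) hmerged_prop
      (hprop (Fin.last k))
    rw [mul_div_cancel₀ _ hD.ne'] at h
    simpa only [Fin.sum_univ_castSucc] using h
end

section
/- Suppose the MG domain is partitioned into k subdomains of equal size d/k with m_i failure-causing MGs in subdomain i, and n selected MGs are allocated equally (n/k per subdomain). Then P_p^{MG} = 1 - ∏_{i=1}^k (1 - k*m_i/d)^(n/k) ≥ 1 - (1 - (Σ_i m_i)/d)^n = P_r^{MG}, with equality if and only if all the ratios m_i are equal. -/
/-!
With `z i = 1 - k * m i / d`, the arithmetic mean of the `z i` is `1 - (∑ i, m i) / d` and the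
PSALM product is `∏ i, z i ^ (n / k) = (∏ i, z i ^ (1 / k)) ^ n`, the `n`-th power of their
geometric mean. The claim is therefore AM-GM raised to the power `n > 0`, and its equality case
holds exactly when all `z i`, equivalently all `m i`, coincide.
-/

open Real

namespace Real

variable {ι : Type*} [Fintype ι] {z : ι → ℝ}

lemma sum_inv_card_mul (z : ι → ℝ) :
    ∑ i, (Fintype.card ι : ℝ)⁻¹ * z i = (∑ i, z i) / Fintype.card ι := by
  rw [← Finset.mul_sum, inv_mul_eq_div]

lemma prod_rpow_div_card_eq_rpow (hz : ∀ i, 0 ≤ z i) (p : ℝ) :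
    ∏ i, z i ^ (p / Fintype.card ι) = (∏ i, z i ^ (Fintype.card ι : ℝ)⁻¹) ^ p := by
  rw [← finsetProd_rpow _ _ (fun i _ ↦ rpow_nonneg (hz i) _)]
  refine Finset.prod_congr rfl fun i _ ↦ ?_
  rw [← rpow_mul (hz i), inv_mul_eq_div]

variable [Nonempty ι]

lemma sum_inv_card : ∑ _i : ι, (Fintype.card ι : ℝ)⁻¹ = 1 := by
  rw [Finset.sum_const, Finset.card_univ, nsmul_eq_mul]
  exact mul_inv_cancel₀ (Nat.cast_ne_zero.mpr Fintype.card_ne_zero)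

theorem prod_rpow_inv_card_le_mean (hz : ∀ i, 0 ≤ z i) :
    ∏ i, z i ^ (Fintype.card ι : ℝ)⁻¹ ≤ (∑ i, z i) / Fintype.card ι := by
  rw [← sum_inv_card_mul]
  exact geom_mean_le_arith_mean_weighted _ _ _ (fun _ _ ↦ by positivity) sum_inv_card
    (fun i _ ↦ hz i)

theorem prod_rpow_inv_card_eq_mean_iff (hz : ∀ i, 0 ≤ z i) :
    ∏ i, z i ^ (Fintype.card ι : ℝ)⁻¹ = (∑ i, z i) / Fintype.card ι ↔ ∀ i j, z i = z j := by
  rw [← sum_inv_card_mul, geom_mean_eq_arith_mean_weighted_iff_of_pos _ _ _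
    (fun _ _ ↦ by positivity) sum_inv_card (fun i _ ↦ hz i)]
  simp only [Finset.mem_univ, forall_const]

theorem prod_rpow_div_card_le_mean_rpow (hz : ∀ i, 0 ≤ z i) {p : ℝ} (hp : 0 ≤ p) :
    ∏ i, z i ^ (p / Fintype.card ι) ≤ ((∑ i, z i) / Fintype.card ι) ^ p := by
  rw [prod_rpow_div_card_eq_rpow hz]
  exact rpow_le_rpow (Finset.prod_nonneg fun i _ ↦ rpow_nonneg (hz i) _)
    (prod_rpow_inv_card_le_mean hz) hp

theorem prod_rpow_div_card_eq_mean_rpow_iff (hz : ∀ i, 0 ≤ z i) {p : ℝ} (hp : p ≠ 0) :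
    ∏ i, z i ^ (p / Fintype.card ι) = ((∑ i, z i) / Fintype.card ι) ^ p ↔ ∀ i j, z i = z j := by
  have hmean : 0 ≤ (∑ i, z i) / Fintype.card ι :=
    div_nonneg (Finset.sum_nonneg fun i _ ↦ hz i) (Nat.cast_nonneg _)
  rw [prod_rpow_div_card_eq_rpow hz,
    rpow_left_inj (Finset.prod_nonneg fun i _ ↦ rpow_nonneg (hz i) _) hmean hp,
    prod_rpow_inv_card_eq_mean_iff hz]

end Real

theorem stmt13_general (k : ℕ) (hk : 1 ≤ k) (d n : ℝ) (hd : 0 < d) (hn : 0 < n)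
    (m : Fin k → ℝ) (hm' : ∀ i, m i < d / k) :
    (1 - (1 - (∑ i, m i) / d) ^ n
        ≤ 1 - ∏ i, (1 - (k : ℝ) * m i / d) ^ (n / k)) ∧
    (1 - ∏ i, (1 - (k : ℝ) * m i / d) ^ (n / k)
        = 1 - (1 - (∑ i, m i) / d) ^ n ↔ ∀ i j, m i = m j) := by
  have : Nonempty (Fin k) := ⟨⟨0, hk⟩⟩
  have hk₀ : (k : ℝ) ≠ 0 := by positivity
  set z : Fin k → ℝ := fun i ↦ 1 - k * m i / d
  have hz : ∀ i, 0 ≤ z i := fun i ↦ by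
    have : k * m i < d := by rw [mul_comm, ← lt_div_iff₀ (by positivity)]; exact hm' i
    simp only [z, sub_nonneg, div_le_one hd]
    exact this.le
  have hmean : (∑ i, z i) / Fintype.card (Fin k) = 1 - (∑ i, m i) / d := by
    simp only [z, Finset.sum_sub_distrib, ← Finset.sum_div, ← Finset.mul_sum, Fintype.card_fin,
      Finset.sum_const, Finset.card_univ, nsmul_eq_mul, mul_one]
    field_simp
  have hz_eq : ∀ i j, z i = z j ↔ m i = m j := fun i j ↦ by
    simp only [z, sub_right_inj, div_left_inj' hd.ne', mul_right_inj' hk₀]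
  have hle := prod_rpow_div_card_le_mean_rpow hz hn.le
  have heq := prod_rpow_div_card_eq_mean_rpow_iff hz hn.ne'
  rw [hmean, Fintype.card_fin] at hle heq
  refine ⟨sub_le_sub_left hle 1, ?_⟩
  rw [sub_right_inj, heq]
  simp only [hz_eq]

theorem stmt13 (k : ℕ) (hk : 1 ≤ k) (d n : ℝ) (hd : 0 < d) (hn : 0 < n)
    (m : Fin k → ℝ) (hm : ∀ i, 0 ≤ m i) (hm' : ∀ i, m i < d / k) :
    (1 - (1 - (∑ i, m i) / d) ^ n
        ≤ 1 - ∏ i, (1 - (k : ℝ) * m i / d) ^ (n / k)) ∧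
    (1 - ∏ i, (1 - (k : ℝ) * m i / d) ^ (n / k)
        = 1 - (1 - (∑ i, m i) / d) ^ n ↔ ∀ i j, m i = m j) :=
  stmt13_general k hk d n hd hn m hm'
end
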